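/- arXiv:1812.09723 — 3 statements merged into one kernel-verified Lean document; each statement's English description precedes it below -/
import Mathlib

section
/- Let $(S,\mathcal{A},\mu)$ be a finite measure space, $H$ a separable real Hilbert space, $\lambda>0$ and $\alpha\in(0,1)$. Let $f\colon S\times\mathbb{R}\times H\to\mathbb{R}$ be measurable and suppose that for $\mu$-a.e. $s\in S$: (a) $(y,z)\mapsto f(s,y,z)$ is continuous; (b) $|f(s,y,z)|\le\lambda(1+|y|^{\alpha}+\|z\|^{\alpha})$ for all $(y,z)$; (c) for every $M\in\mathbb{N}$ there is a constant $L_M>0$ (independent of $s$) with $|f(s,y,z)-f(s,y',z')|\le L_M(|y-y'|+\|z-z'\|)$ whenever $|y|,|y'|\le M$ and $\|z\|,\|z'\|\le M$. Then there exists a sequence of measurable functions $f_n\colon S\times\mathbb{R}\times H\to\mathbb{R}$ such that: (i) for each $n$ there is a constant $K_n$ with $|f_n(s,y,z)-f_n(s,y',z')|\le K_n(|y-y'|+\|z-z'\|)$ for a.e. $s$ and all $(y,z),(y',z')$; (ii) $\sup_n |f_n(s,y,z)|\le |f(s,y,z)|\le\lambda(1+|y|^{\alpha}+\|z\|^{\alpha})$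 for a.e. $s$ and all $(y,z)$; (iii) for every $M>0$, $\Phi_M(f_n-f):=\big(\int_S \sup_{|y|\le M,\;\|z\|\le M}|f_n(s,y,z)-f(s,y,z)|^{2}\,\mu(ds)\big)^{1/2}\to 0$ as $n\to\infty$. -/
/-!
Take `fₙ = ρₙ f`, where `ρₙ(y, z)` is a Lipschitz cutoff equal to `1` for `max |y| ‖z‖ ≤ n` and
to `0` for `max |y| ‖z‖ > n + 1`. Where `ρₙ ≠ 0`, `f(s, ·)` is Lipschitz with the constant
`L_{n+1}` and bounded through the growth condition, which makes `ρₙ f` globally Lipschitz;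
`0 ≤ ρₙ ≤ 1` gives `|fₙ| ≤ |f|`; and once `n ≥ M`, `fₙ = f` on the ball of radius `M`, so
`Φ_M(fₙ - f)` vanishes for all large `n`.
-/

open Filter MeasureTheory

section BallCutoff

variable {X : Type*} [SeminormedAddCommGroup X]

noncomputable def ballCutoff (r : ℝ) (x : X) : ℝ := min 1 (max 0 (r + 1 - ‖x‖))

theorem ballCutoff_nonneg (r : ℝ) (x : X) : 0 ≤ ballCutoff r x :=
  le_min zero_le_one (le_max_left _ _)

theorem ballCutoff_le_one (r : ℝ) (x : X) : ballCutoff r x ≤ 1 :=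
  min_le_left _ _

theorem ballCutoff_eq_one {r : ℝ} {x : X} (hx : ‖x‖ ≤ r) : ballCutoff r x = 1 :=
  min_eq_left (le_max_of_le_right (by linarith))

theorem ballCutoff_eq_zero {r : ℝ} {x : X} (hx : r + 1 < ‖x‖) : ballCutoff r x = 0 := by
  rw [ballCutoff, max_eq_left (by linarith), min_eq_right zero_le_one]

theorem lipschitzWith_ballCutoff (r : ℝ) : LipschitzWith 1 (ballCutoff (X := X) r) := by
  have h : LipschitzWith 1 fun x : X => r + 1 - ‖x‖ :=
    LipschitzWith.of_dist_le_mul fun x y => by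
      rw [Real.dist_eq, NNReal.coe_one, one_mul, dist_eq_norm, sub_sub_sub_cancel_left,
        abs_sub_comm]
      exact abs_norm_sub_norm_le x y
  exact (h.const_max 0).const_min 1

theorem abs_ballCutoff_mul_le (r : ℝ) (x : X) (a : ℝ) : |ballCutoff r x * a| ≤ |a| := by
  rw [abs_mul, abs_of_nonneg (ballCutoff_nonneg r x)]
  exact mul_le_of_le_one_left (abs_nonneg a) (ballCutoff_le_one r x)

theorem abs_ballCutoff_mul_sub_le {r L B : ℝ} {g : X → ℝ} (hL : 0 ≤ L) (hB : 0 ≤ B)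
    (hg_lip : ∀ x y, ‖x‖ ≤ r + 1 → ‖y‖ ≤ r + 1 → |g x - g y| ≤ L * ‖x - y‖)
    (hg_bound : ∀ x, ‖x‖ ≤ r + 1 → |g x| ≤ B) (x y : X) :
    |ballCutoff r x * g x - ballCutoff r y * g y| ≤ (L + B) * ‖x - y‖ := by
  have hcut : ∀ x y : X, |ballCutoff r x - ballCutoff r y| ≤ ‖x - y‖ := fun x y => by
    simpa [Real.dist_eq, dist_eq_norm] using (lipschitzWith_ballCutoff r).dist_le_mul x y
  have of_mem_ball : ∀ x y : X, ‖y‖ ≤ r + 1 →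
      |ballCutoff r x * g x - ballCutoff r y * g y| ≤ (L + B) * ‖x - y‖ := by
    intro x y hy
    have h₁ : |ballCutoff r x * (g x - g y)| ≤ L * ‖x - y‖ := by
      by_cases hx : ‖x‖ ≤ r + 1
      · exact (abs_ballCutoff_mul_le r x _).trans (hg_lip x y hx hy)
      · rw [ballCutoff_eq_zero (not_le.1 hx), zero_mul, abs_zero]
        positivity
    have h₂ : |(ballCutoff r x - ballCutoff r y) * g y| ≤ ‖x - y‖ * B := by
      rw [abs_mul]
      exact mul_le_mul (hcut x y) (hg_bound y hy) (abs_nonneg _) (norm_nonneg _)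
    calc |ballCutoff r x * g x - ballCutoff r y * g y|
        = |ballCutoff r x * (g x - g y) + (ballCutoff r x - ballCutoff r y) * g y| := by
          ring_nf
      _ ≤ L * ‖x - y‖ + ‖x - y‖ * B := (abs_add_le _ _).trans (add_le_add h₁ h₂)
      _ = (L + B) * ‖x - y‖ := by ring
  by_cases hy : ‖y‖ ≤ r + 1
  · exact of_mem_ball x y hy
  by_cases hx : ‖x‖ ≤ r + 1
  · rw [abs_sub_comm, norm_sub_rev]
    exact of_mem_ball y x hx
  rw [ballCutoff_eq_zero (not_le.1 hx), ballCutoff_eq_zero (not_le.1 hy), zero_mul, zero_mul,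
    sub_zero, abs_zero]
  positivity

end BallCutoff

section Prod

variable {E : Type*} [SeminormedAddCommGroup E]

theorem abs_add_norm_le_two_mul_norm_prod (y : ℝ) (z : E) : |y| + ‖z‖ ≤ 2 * ‖(y, z)‖ := by
  rw [Prod.norm_def, Real.norm_eq_abs]
  linarith [le_max_left |y| ‖z‖, le_max_right |y| ‖z‖]

theorem norm_prod_le_abs_add_norm (y : ℝ) (z : E) : ‖(y, z)‖ ≤ |y| + ‖z‖ := by
  rw [Prod.norm_def, Real.norm_eq_abs]
  exact max_le (le_add_of_nonneg_right (norm_nonneg z)) (le_add_of_nonneg_left (abs_nonneg y))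

-- The norm of `ℝ × E` is `max |y| ‖z‖`, so Lipschitz constants for the sum distance double.
theorem abs_ballCutoff_mul_sub_le_prod {r L B : ℝ} {g : ℝ → E → ℝ} (hL : 0 ≤ L) (hB : 0 ≤ B)
    (hg_lip : ∀ (y y' : ℝ) (z z' : E), |y| ≤ r + 1 → |y'| ≤ r + 1 → ‖z‖ ≤ r + 1 →
      ‖z'‖ ≤ r + 1 → |g y z - g y' z'| ≤ L * (|y - y'| + ‖z - z'‖))
    (hg_bound : ∀ (y : ℝ) (z : E), |y| ≤ r + 1 → ‖z‖ ≤ r + 1 → |g y z| ≤ B)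
    (y y' : ℝ) (z z' : E) :
    |ballCutoff r (y, z) * g y z - ballCutoff r (y', z') * g y' z'| ≤
      (2 * L + B) * (|y - y'| + ‖z - z'‖) := by
  have h := abs_ballCutoff_mul_sub_le (g := fun p : ℝ × E => g p.1 p.2) (r := r)
    (by positivity : 0 ≤ 2 * L) hB ?_ ?_ (y, z) (y', z')
  · exact h.trans (mul_le_mul_of_nonneg_left (norm_prod_le_abs_add_norm _ _) (by positivity))
  · rintro ⟨y, z⟩ ⟨y', z'⟩ hp hp'
    rw [norm_prod_le_iff] at hp hp'
    calc |g y z - g y' z'| ≤ L * (|y - y'| + ‖z - z'‖) := hg_lip y y' z z' hp.1 hp'.1 hp.2 hp'.2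
      _ ≤ L * (2 * ‖(y, z) - (y', z')‖) :=
          mul_le_mul_of_nonneg_left (abs_add_norm_le_two_mul_norm_prod _ _) hL
      _ = 2 * L * ‖(y, z) - (y', z')‖ := by ring
  · rintro ⟨y, z⟩ hp
    rw [norm_prod_le_iff] at hp
    exact hg_bound y z hp.1 hp.2

end Prod

theorem mul_one_add_rpow_add_rpow_le {lam α a b R : ℝ} (hlam : 0 ≤ lam) (hα : 0 ≤ α)
    (ha : 0 ≤ a) (hb : 0 ≤ b) (haR : a ≤ R) (hbR : b ≤ R) :
    lam * (1 + a ^ α + b ^ α) ≤ lam * (1 + 2 * R ^ α) := by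
  have := Real.rpow_le_rpow ha haR hα
  have := Real.rpow_le_rpow hb hbR hα
  gcongr lam * ?_
  linarith

theorem stmt_0_general {S : Type*} [MeasurableSpace S] (μ : Measure S)
    {H : Type*} [NormedAddCommGroup H]
    [MeasurableSpace H] [BorelSpace H]
    (lam α : ℝ) (hlam : 0 < lam) (hα : α ∈ Set.Ioo (0 : ℝ) 1)
    (f : S → ℝ → H → ℝ)
    (hf_meas : Measurable fun p : S × ℝ × H => f p.1 p.2.1 p.2.2)
    (hgrowth : ∀ᵐ s ∂μ, ∀ (y : ℝ) (z : H), |f s y z| ≤ lam * (1 + |y| ^ α + ‖z‖ ^ α))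
    (hlip : ∀ M : ℕ, ∃ L : ℝ, 0 < L ∧
      ∀ᵐ s ∂μ, ∀ (y y' : ℝ) (z z' : H), |y| ≤ M → |y'| ≤ M → ‖z‖ ≤ M → ‖z'‖ ≤ M →
        |f s y z - f s y' z'| ≤ L * (|y - y'| + ‖z - z'‖)) :
    ∃ fn : ℕ → S → ℝ → H → ℝ,
      (∀ n, Measurable fun p : S × ℝ × H => fn n p.1 p.2.1 p.2.2) ∧
      (∀ n, ∃ K : ℝ, ∀ᵐ s ∂μ, ∀ (y y' : ℝ) (z z' : H),
        |fn n s y z - fn n s y' z'| ≤ K * (|y - y'| + ‖z - z'‖)) ∧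
      (∀ᵐ s ∂μ, ∀ (y : ℝ) (z : H),
        (⨆ n, |fn n s y z|) ≤ |f s y z| ∧
        |f s y z| ≤ lam * (1 + |y| ^ α + ‖z‖ ^ α)) ∧
      (∀ M : ℝ, 0 < M →
        Tendsto
          (fun n =>
            (∫ s, (⨆ (y : ℝ) (_ : |y| ≤ M) (z : H) (_ : ‖z‖ ≤ M),
              |fn n s y z - f s y z|) ^ 2 ∂μ) ^ (1 / 2 : ℝ))
          atTop (nhds 0)) := by
  refine ⟨fun n s y z => ballCutoff n (y, z) * f s y z, fun n => ?_, fun n => ?_, ?_,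
    fun M _ => ?_⟩
  · exact ((lipschitzWith_ballCutoff _).continuous.measurable.comp measurable_snd).mul hf_meas
  · obtain ⟨L, hL, hLip⟩ := hlip (n + 1)
    refine ⟨2 * L + lam * (1 + 2 * ((n : ℝ) + 1) ^ α), ?_⟩
    filter_upwards [hLip, hgrowth] with s hs hg
    push_cast at hs
    exact abs_ballCutoff_mul_sub_le_prod hL.le (by positivity) hs fun y z hy hz =>
      (hg y z).trans (mul_one_add_rpow_add_rpow_le hlam.le hα.1.le (abs_nonneg y)
        (norm_nonneg z) hy hz)
  · filter_upwards [hgrowth] with s hg y z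
    exact ⟨ciSup_le fun n => abs_ballCutoff_mul_le _ _ _, hg y z⟩
  · refine tendsto_const_nhds.congr' ?_
    filter_upwards [eventually_ge_atTop ⌈M⌉₊] with n hn
    have hMn : M ≤ n := (Nat.le_ceil M).trans (Nat.cast_le.2 hn)
    have hcut : ∀ (y : ℝ) (z : H), |y| ≤ M → ‖z‖ ≤ M → ballCutoff n (y, z) = 1 :=
      fun y z hy hz => ballCutoff_eq_one (norm_prod_le_iff.2 ⟨hy.trans hMn, hz.trans hMn⟩)
    simp +contextual [hcut]

/-- Approximation lemma for locally Lipschitz BSDE generators: if `f : S × ℝ × H → ℝ` is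
measurable, a.e. continuous in `(y,z)`, a.e. of sublinear growth
`|f(s,y,z)| ≤ λ(1+|y|^α+‖z‖^α)` with `α ∈ (0,1)`, and Lipschitz on every ball `B(0,M)`
with a constant `L_M` independent of `s`, then there is a sequence of measurable functions
`fₙ` which are (i) globally Lipschitz in `(y,z)` uniformly a.e. in `s`, (ii) dominated by
`|f|`, and (iii) such that `Φ_M(fₙ - f) → 0` for every `M > 0`, where
`Φ_M(g) = (∫_S sup_{|y|≤M, ‖z‖≤M} |g(s,y,z)|² μ(ds))^{1/2}`. -/
theorem stmt_0 {S : Type*} [MeasurableSpace S] (μ : Measure S) [IsFiniteMeasure μ]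
    {H : Type*} [NormedAddCommGroup H] [InnerProductSpace ℝ H]
    [TopologicalSpace.SeparableSpace H] [MeasurableSpace H] [BorelSpace H]
    (lam α : ℝ) (hlam : 0 < lam) (hα : α ∈ Set.Ioo (0 : ℝ) 1)
    (f : S → ℝ → H → ℝ)
    (hf_meas : Measurable fun p : S × ℝ × H => f p.1 p.2.1 p.2.2)
    (hcont : ∀ᵐ s ∂μ, Continuous fun p : ℝ × H => f s p.1 p.2)
    (hgrowth : ∀ᵐ s ∂μ, ∀ (y : ℝ) (z : H), |f s y z| ≤ lam * (1 + |y| ^ α + ‖z‖ ^ α))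
    (hlip : ∀ M : ℕ, ∃ L : ℝ, 0 < L ∧
      ∀ᵐ s ∂μ, ∀ (y y' : ℝ) (z z' : H), |y| ≤ M → |y'| ≤ M → ‖z‖ ≤ M → ‖z'‖ ≤ M →
        |f s y z - f s y' z'| ≤ L * (|y - y'| + ‖z - z'‖)) :
    ∃ fn : ℕ → S → ℝ → H → ℝ,
      (∀ n, Measurable fun p : S × ℝ × H => fn n p.1 p.2.1 p.2.2) ∧
      (∀ n, ∃ K : ℝ, ∀ᵐ s ∂μ, ∀ (y y' : ℝ) (z z' : H),
        |fn n s y z - fn n s y' z'| ≤ K * (|y - y'| + ‖z - z'‖)) ∧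
      (∀ᵐ s ∂μ, ∀ (y : ℝ) (z : H),
        (⨆ n, |fn n s y z|) ≤ |f s y z| ∧
        |f s y z| ≤ lam * (1 + |y| ^ α + ‖z‖ ^ α)) ∧
      (∀ M : ℝ, 0 < M →
        Tendsto
          (fun n =>
            (∫ s, (⨆ (y : ℝ) (_ : |y| ≤ M) (z : H) (_ : ‖z‖ ≤ M),
              |fn n s y z - f s y z|) ^ 2 ∂μ) ^ (1 / 2 : ℝ))
          atTop (nhds 0)) :=
  stmt_0_general μ lam α hlam hα f hf_meas hgrowth hlip
end

section
/- Let $H$ be a real Hilbert space, $\lambda>0$ and $\alpha\in(0,1)$. Let $f\colon\mathbb{R}\times H\to\mathbb{R}$ be continuous, satisfy $|f(y,z)|\le\lambda(1+|y|^{\alpha}+\|z\|^{\alpha})$ for all $(y,z)$, and be Lipschitz on every ball: for each $M>0$ there is $L_M>0$ with $|f(y,z)-f(y',z')|\le L_M(|y-y'|+\|z-z'\|)$ whenever $|y|,|y'|\le M$ and $\|z\|,\|z'\|\le M$. Then there exists a sequence of functions $f_n\colon\mathbb{R}\times H\to\mathbb{R}$ such that: (i) each $f_n$ is globally Lipschitz;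 (ii) $|f_n(y,z)|\le |f(y,z)|$ for all $n$ and all $(y,z)$; (iii) for every $M>0$, $\sup_{|y|\le M,\;\|z\|\le M}|f_n(y,z)-f(y,z)|\to 0$ as $n\to\infty$. -/
/-!
The inf-convolution `⨅ p, g p + c * dist x p` of a function `g` of at most linear growth is
`c`-Lipschitz and lies below `g`. If `g` is moreover Lipschitz near a ball, it coincides with `g`
on that ball once `c` is large: nearby competitors `p` lose by the local Lipschitz bound, distant
ones because `c * dist x p` outgrows the linear growth of `g`. Regularising `f` and `-f` in this
way and recombining their positive parts, `max f_c 0 - max (-f)_c 0`, yields Lipschitz functions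
dominated by `|f|` that agree with `f` on any given ball for all large `c`.
-/

open Filter Metric
open scoped NNReal

noncomputable section

theorem Real.rpow_le_one_add {t α : ℝ} (ht : 0 ≤ t) (hα₀ : 0 ≤ α) (hα₁ : α ≤ 1) :
    t ^ α ≤ 1 + t := by
  rcases le_total t 1 with h | h
  · linarith [Real.rpow_le_one ht h hα₀]
  · linarith [Real.rpow_le_self_of_one_le h hα₁]

theorem Prod.dist_le_dist_fst_add_dist_snd {α β : Type*} [PseudoMetricSpace α]
    [PseudoMetricSpace β] (p q : α × β) : dist p q ≤ dist p.1 q.1 + dist p.2 q.2 :=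
  max_le_add_of_nonneg dist_nonneg dist_nonneg

theorem Prod.dist_fst_add_dist_snd_le {α β : Type*} [PseudoMetricSpace α]
    [PseudoMetricSpace β] (p q : α × β) : dist p.1 q.1 + dist p.2 q.2 ≤ 2 * dist p q := by
  linarith [le_max_left (dist p.1 q.1) (dist p.2 q.2), le_max_right (dist p.1 q.1) (dist p.2 q.2),
    Prod.dist_eq (x := p) (y := q)]

theorem Prod.mem_closedBall_zero_iff {E F : Type*} [SeminormedAddCommGroup E]
    [SeminormedAddCommGroup F] {p : E × F} {r : ℝ} :
    p ∈ closedBall 0 r ↔ ‖p.1‖ ≤ r ∧ ‖p.2‖ ≤ r := by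
  rw [_root_.mem_closedBall_zero_iff, Prod.norm_def, max_le_iff]

theorem Real.iSup_bounded_iSup_bounded_eq_zero {ι κ : Type*} {P : ι → Prop} {Q : κ → Prop}
    {g : ι → κ → ℝ} (h : ∀ i, P i → ∀ j, Q j → g i j = 0) :
    ⨆ (i) (_ : P i) (j) (_ : Q j), g i j = 0 := by
  simp only [iSup_congr fun i => iSup_congr fun hi => iSup_congr fun j => iSup_congr fun hj =>
    h i hi j hj, Real.iSup_const_zero]

theorem abs_max_zero_sub_max_zero_le {α : Type*} [AddCommGroup α] [LinearOrder α]
    [IsOrderedAddMonoid α] {u v t : α} (hu : u ≤ t) (hv : v ≤ -t) :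
    |max u 0 - max v 0| ≤ |t| := by
  rcases le_total 0 t with ht | ht
  · rw [max_eq_right (hv.trans (neg_nonpos.2 ht)), sub_zero, abs_of_nonneg (le_max_right _ _),
      abs_of_nonneg ht]
    exact max_le hu ht
  · rw [max_eq_right (hu.trans ht), zero_sub, abs_neg, abs_of_nonneg (le_max_right _ _),
      abs_of_nonpos ht]
    exact max_le hv (neg_nonneg.2 ht)

section InfConvolution

variable {X : Type*} [PseudoMetricSpace X] {g : X → ℝ} {a b c : ℝ} {x₀ : X}

def infConv (g : X → ℝ) (c : ℝ) (x : X) : ℝ :=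
  ⨅ p, g p + c * dist x p

theorem bddBelow_range_add_mul_dist (hb : 0 ≤ b) (hbc : b ≤ c)
    (hg : ∀ p, -(a + b * dist p x₀) ≤ g p) (x : X) :
    BddBelow (Set.range fun p => g p + c * dist x p) := by
  refine ⟨-(a + b * dist x x₀), ?_⟩
  rintro _ ⟨p, rfl⟩
  nlinarith [hg p, mul_le_mul_of_nonneg_left (dist_triangle_left p x₀ x) hb,
    mul_le_mul_of_nonneg_right hbc (dist_nonneg (x := x) (y := p))]

theorem infConv_le (hbdd : ∀ x, BddBelow (Set.range fun p => g p + c * dist x p)) (x : X) :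
    infConv g c x ≤ g x :=
  (ciInf_le (hbdd x) x).trans_eq (by rw [dist_self, mul_zero, add_zero])

theorem infConv_le_add_mul_dist (hc : 0 ≤ c)
    (hbdd : ∀ x, BddBelow (Set.range fun p => g p + c * dist x p)) (x y : X) :
    infConv g c x ≤ infConv g c y + c * dist x y := by
  have : Nonempty X := ⟨x⟩
  rw [← sub_le_iff_le_add]
  refine le_ciInf fun p => ?_
  have hx : infConv g c x ≤ g p + c * dist x p := ciInf_le (hbdd x) p
  nlinarith [mul_le_mul_of_nonneg_left (dist_triangle x y p) hc]

theorem lipschitzWith_infConv (hc : 0 ≤ c)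
    (hbdd : ∀ x, BddBelow (Set.range fun p => g p + c * dist x p)) :
    LipschitzWith (Real.toNNReal c) (infConv g c) :=
  LipschitzWith.of_le_add_mul' c (infConv_le_add_mul_dist hc hbdd)

theorem le_add_mul_dist_of_mem_closedBall {R : ℝ} {L : ℝ≥0} {x p : X}
    (hg : ∀ p, |g p| ≤ a + b * dist p x₀) (hb : 0 ≤ b)
    (hL : LipschitzOnWith L g (closedBall x₀ (R + 1))) (hx : x ∈ closedBall x₀ R)
    (hLc : L ≤ c) (hc : b + 2 * (a + b * R) ≤ c) :
    g x ≤ g p + c * dist x p := by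
  have hxR : dist x x₀ ≤ R := mem_closedBall.1 hx
  have hpx₀ : dist p x₀ ≤ dist x p + R := by linarith [dist_triangle_left p x₀ x]
  rcases le_or_gt (dist x p) 1 with hnear | hfar
  · have hp : p ∈ closedBall x₀ (R + 1) := mem_closedBall.2 (by linarith)
    have hLip := hL.dist_le_mul x (closedBall_subset_closedBall (by linarith) hx) p hp
    rw [Real.dist_eq] at hLip
    nlinarith [le_abs_self (g x - g p), mul_le_mul_of_nonneg_right hLc (dist_nonneg (x := x) (y := p))]
  · have hgx : |g x| ≤ a + b * R := (hg x).trans (by gcongr)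
    have hgp : -(a + b * (dist x p + R)) ≤ g p :=
      (neg_le_neg ((hg p).trans (by gcongr))).trans (neg_abs_le _)
    nlinarith [le_abs_self (g x), abs_nonneg (g x),
      mul_le_mul_of_nonneg_right hc (dist_nonneg (x := x) (y := p)),
      mul_le_mul_of_nonneg_left hfar.le ((abs_nonneg (g x)).trans hgx)]

theorem eventually_infConv_eq {R : ℝ} {L : ℝ≥0} (hg : ∀ p, |g p| ≤ a + b * dist p x₀)
    (hb : 0 ≤ b) (hL : LipschitzOnWith L g (closedBall x₀ (R + 1))) :
    ∀ᶠ c in atTop, ∀ x ∈ closedBall x₀ R, infConv g c x = g x := by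
  filter_upwards [eventually_ge_atTop b, eventually_ge_atTop (L : ℝ),
    eventually_ge_atTop (b + 2 * (a + b * R))] with c hbc hLc hc x hx
  have hbdd := bddBelow_range_add_mul_dist hb hbc fun p => neg_le_of_abs_le (hg p)
  have : Nonempty X := ⟨x⟩
  exact le_antisymm (infConv_le hbdd x)
    (le_ciInf fun p => le_add_mul_dist_of_mem_closedBall hg hb hL hx hLc hc)

def infConvApprox (g : X → ℝ) (c : ℝ) (x : X) : ℝ :=
  max (infConv g c x) 0 - max (infConv (-g) c x) 0

theorem lipschitzWith_infConvApprox (hg : ∀ p, |g p| ≤ a + b * dist p x₀) (hb : 0 ≤ b)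
    (hbc : b ≤ c) :
    LipschitzWith (2 * Real.toNNReal c) (infConvApprox g c) := by
  rw [two_mul]
  have hc : 0 ≤ c := hb.trans hbc
  have hbdd := bddBelow_range_add_mul_dist hb hbc fun p => neg_le_of_abs_le (hg p)
  have hbdd' := bddBelow_range_add_mul_dist (g := -g) hb hbc fun p =>
    neg_le_of_abs_le ((abs_neg (g p)).trans_le (hg p))
  exact ((lipschitzWith_infConv hc hbdd).max_const 0).sub
    ((lipschitzWith_infConv hc hbdd').max_const 0)

theorem abs_infConvApprox_le (hg : ∀ p, |g p| ≤ a + b * dist p x₀) (hb : 0 ≤ b)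
    (hbc : b ≤ c) (x : X) : |infConvApprox g c x| ≤ |g x| := by
  have hbdd := bddBelow_range_add_mul_dist hb hbc fun p => neg_le_of_abs_le (hg p)
  have hbdd' := bddBelow_range_add_mul_dist (g := -g) hb hbc fun p =>
    neg_le_of_abs_le ((abs_neg (g p)).trans_le (hg p))
  exact abs_max_zero_sub_max_zero_le (infConv_le hbdd x) (infConv_le hbdd' x)

theorem eventually_infConvApprox_eq {R : ℝ} {L : ℝ≥0} (hg : ∀ p, |g p| ≤ a + b * dist p x₀)
    (hb : 0 ≤ b) (hL : LipschitzOnWith L g (closedBall x₀ (R + 1))) :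
    ∀ᶠ c in atTop, ∀ x ∈ closedBall x₀ R, infConvApprox g c x = g x := by
  have hg' : ∀ p, |(-g) p| ≤ a + b * dist p x₀ := fun p => (abs_neg (g p)).trans_le (hg p)
  filter_upwards [eventually_infConv_eq hg hb hL, eventually_infConv_eq hg' hb hL.neg]
    with c hpos hneg x hx
  rw [infConvApprox, hpos x hx, hneg x hx, Pi.neg_apply, max_zero_sub_max_neg_zero_eq_self]

end InfConvolution

end

section ProdReal

variable {E : Type*} [SeminormedAddCommGroup E] {f : ℝ → E → ℝ}

theorem abs_uncurry_le_of_abs_le_rpow {lam α : ℝ} (hlam : 0 ≤ lam) (hα₀ : 0 ≤ α) (hα₁ : α ≤ 1)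
    (hf : ∀ y z, |f y z| ≤ lam * (1 + |y| ^ α + ‖z‖ ^ α)) (p : ℝ × E) :
    |Function.uncurry f p| ≤ 3 * lam + 2 * lam * dist p 0 := by
  have hy := Real.rpow_le_one_add (abs_nonneg p.1) hα₀ hα₁
  have hz := Real.rpow_le_one_add (norm_nonneg p.2) hα₀ hα₁
  have hp : |p.1| + ‖p.2‖ ≤ 2 * dist p 0 := by
    simpa [Real.dist_eq] using Prod.dist_fst_add_dist_snd_le p 0
  show |f p.1 p.2| ≤ _
  nlinarith [hf p.1 p.2]

theorem lipschitzOnWith_uncurry_closedBall {R L : ℝ} (hL : 0 ≤ L)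
    (hf : ∀ (y y' : ℝ) (z z' : E), |y| ≤ R → |y'| ≤ R → ‖z‖ ≤ R → ‖z'‖ ≤ R →
      |f y z - f y' z'| ≤ L * (|y - y'| + ‖z - z'‖)) :
    LipschitzOnWith (Real.toNNReal (L * 2)) (Function.uncurry f) (closedBall 0 R) := by
  refine LipschitzOnWith.of_dist_le' fun p hp q hq => ?_
  rw [Prod.mem_closedBall_zero_iff, Real.norm_eq_abs] at hp hq
  calc dist (f p.1 p.2) (f q.1 q.2) = |f p.1 p.2 - f q.1 q.2| := Real.dist_eq _ _
    _ ≤ L * (|p.1 - q.1| + ‖p.2 - q.2‖) := hf _ _ _ _ hp.1 hq.1 hp.2 hq.2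
    _ ≤ L * 2 * dist p q := by
      rw [mul_assoc, ← Real.dist_eq, ← dist_eq_norm]
      exact mul_le_mul_of_nonneg_left (Prod.dist_fst_add_dist_snd_le p q) hL

theorem LipschitzWith.abs_sub_le_mul_add {K : ℝ≥0} {F : ℝ × E → ℝ} (hF : LipschitzWith K F)
    (y y' : ℝ) (z z' : E) : |F (y, z) - F (y', z')| ≤ K * (|y - y'| + ‖z - z'‖) := by
  rw [← Real.dist_eq, ← Real.dist_eq, ← dist_eq_norm]
  exact (hF.dist_le_mul _ _).trans (by gcongr; exact Prod.dist_le_dist_fst_add_dist_snd _ _)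

end ProdReal

theorem stmt_1_general {H : Type*} [NormedAddCommGroup H]
    (lam α : ℝ) (hlam : 0 < lam) (hα : α ∈ Set.Ioo (0 : ℝ) 1)
    (f : ℝ → H → ℝ)
    (hgrowth : ∀ (y : ℝ) (z : H), |f y z| ≤ lam * (1 + |y| ^ α + ‖z‖ ^ α))
    (hlip : ∀ M : ℝ, 0 < M → ∃ L : ℝ, 0 < L ∧
      ∀ (y y' : ℝ) (z z' : H), |y| ≤ M → |y'| ≤ M → ‖z‖ ≤ M → ‖z'‖ ≤ M →
        |f y z - f y' z'| ≤ L * (|y - y'| + ‖z - z'‖)) :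
    ∃ fn : ℕ → ℝ → H → ℝ,
      (∀ n, ∃ K : ℝ, ∀ (y y' : ℝ) (z z' : H),
        |fn n y z - fn n y' z'| ≤ K * (|y - y'| + ‖z - z'‖)) ∧
      (∀ n (y : ℝ) (z : H), |fn n y z| ≤ |f y z|) ∧
      (∀ M : ℝ, 0 < M →
        Tendsto
          (fun n => ⨆ (y : ℝ) (_ : |y| ≤ M) (z : H) (_ : ‖z‖ ≤ M), |fn n y z - f y z|)
          atTop (nhds 0)) := by
  obtain ⟨hα₀, hα₁⟩ := hα
  have hF := abs_uncurry_le_of_abs_le_rpow hlam.le hα₀.le hα₁.le hgrowth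
  have hc : ∀ n : ℕ, 2 * lam ≤ 2 * lam + n := fun n => by simp
  refine ⟨fun n y z => infConvApprox (Function.uncurry f) (2 * lam + n) (y, z),
    fun n => ⟨_, (lipschitzWith_infConvApprox hF (by positivity) (hc n)).abs_sub_le_mul_add⟩,
    fun n y z => abs_infConvApprox_le hF (by positivity) (hc n) (y, z), fun M hM => ?_⟩
  obtain ⟨L, hL0, hL⟩ := hlip (M + 1) (by linarith)
  have hev := (tendsto_atTop_add_const_left atTop (2 * lam) tendsto_natCast_atTop_atTop).eventually
    (eventually_infConvApprox_eq hF (by positivity) (lipschitzOnWith_uncurry_closedBall hL0.le hL))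
  refine tendsto_const_nhds.congr' ?_
  filter_upwards [hev] with n hn
  refine (Real.iSup_bounded_iSup_bounded_eq_zero fun y hy z hz => ?_).symm
  rw [hn (y, z) (Prod.mem_closedBall_zero_iff.2 ⟨hy, hz⟩), Function.uncurry_apply_pair, sub_self,
    abs_zero]

/-- Pointwise core of the approximation lemma: a continuous, locally Lipschitz function
`f : ℝ × H → ℝ` with sublinear growth `|f(y,z)| ≤ λ(1+|y|^α+‖z‖^α)`, `α ∈ (0,1)`, can be
approximated uniformly on balls by globally Lipschitz functions dominated by `|f|`. -/
theorem stmt_1 {H : Type*} [NormedAddCommGroup H] [InnerProductSpace ℝ H]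
    (lam α : ℝ) (hlam : 0 < lam) (hα : α ∈ Set.Ioo (0 : ℝ) 1)
    (f : ℝ → H → ℝ)
    (hcont : Continuous fun p : ℝ × H => f p.1 p.2)
    (hgrowth : ∀ (y : ℝ) (z : H), |f y z| ≤ lam * (1 + |y| ^ α + ‖z‖ ^ α))
    (hlip : ∀ M : ℝ, 0 < M → ∃ L : ℝ, 0 < L ∧
      ∀ (y y' : ℝ) (z z' : H), |y| ≤ M → |y'| ≤ M → ‖z‖ ≤ M → ‖z'‖ ≤ M →
        |f y z - f y' z'| ≤ L * (|y - y'| + ‖z - z'‖)) :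
    ∃ fn : ℕ → ℝ → H → ℝ,
      (∀ n, ∃ K : ℝ, ∀ (y y' : ℝ) (z z' : H),
        |fn n y z - fn n y' z'| ≤ K * (|y - y'| + ‖z - z'‖)) ∧
      (∀ n (y : ℝ) (z : H), |fn n y z| ≤ |f y z|) ∧
      (∀ M : ℝ, 0 < M →
        Tendsto
          (fun n => ⨆ (y : ℝ) (_ : |y| ≤ M) (z : H) (_ : ‖z‖ ≤ M), |fn n y z - f y z|)
          atTop (nhds 0)) :=
  stmt_1_general lam α hlam hα f hgrowth hlip
end

section
/- Let $t\le T$, $A\ge 0$, $\lambda\ge 0$, let $u\colon[t,T]\to[0,\infty)$ be bounded measurable and $w\colon[t,T]\to[0,\infty)$ integrable, and suppose that for every $s\in[t,T]$: $u(s)+\int_s^{T}w(r)\,dr\le A+2\lambda\int_s^{T}\big(3\sqrt{u(r)}+u(r)+\sqrt{u(r)\,w(r)}\big)\,dr$. Then, with $C_1:=\big(A+9(T-t)\big)\exp\big((1+4\lambda^{2})(T-t)\big)$, one has $u(s)\le C_1$ for every $s\in[t,T]$, and $\int_t^{T}w(r)\,dr\le 2\big(A+9(T-t)\big)+2(1+4\lambda^{2})(T-t)\,C_1$.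 -/
/-!
Writing `c = 1 + 4λ²` and `B = A + 9(T - t)`, the elementary estimates `6λ√u ≤ 9 + λ²u`,
`2λu ≤ (1 + λ²)u` and `2λ√(uw) ≤ 2λ²u + w/2` absorb the generator term, leaving
`u(s) + ½∫_s^T w ≤ B + c∫_s^T u`. Backward Gronwall gives `u(s) ≤ B e^{c(T-s)}`: the gap
`u - B e^{c(T-·)}` satisfies the homogeneous inequality, and iterating that inequality bounds
the gap by a constant times `(c(T-s))ⁿ/n! → 0`. Feeding the bound on `u` back in controls `∫ w`.
-/

open MeasureTheory Set Real
open scoped Nat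

theorem Real.sqrt_mul_le_half_abs_add (a b : ℝ) : √(a * b) ≤ (|a| + |b|) / 2 := by
  have hprod : √(a * b) ≤ √|a| * √|b| := by
    rw [← Real.sqrt_mul (abs_nonneg a), ← abs_mul]
    exact Real.sqrt_le_sqrt (le_abs_self _)
  nlinarith [sq_nonneg (√|a| - √|b|), Real.sq_sqrt (abs_nonneg a), Real.sq_sqrt (abs_nonneg b)]

theorem two_mul_growth_le (lam : ℝ) {a b : ℝ} (ha : 0 ≤ a) (hb : 0 ≤ b) :
    2 * lam * (3 * √a + a + √(a * b)) ≤ 9 + (1 + 4 * lam ^ 2) * a + b / 2 := by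
  rw [Real.sqrt_mul ha]
  nlinarith [sq_nonneg (lam * √a - 3), sq_nonneg (2 * lam * √a - √b),
    mul_nonneg (sq_nonneg (1 - lam)) ha, Real.sq_sqrt ha, Real.sq_sqrt hb]

namespace IntervalIntegrable

variable {f g : ℝ → ℝ} {μ : Measure ℝ} {a b : ℝ}

theorem sqrt_mul (hf : IntervalIntegrable f μ a b) (hg : IntervalIntegrable g μ a b) :
    IntervalIntegrable (fun x => √(f x * g x)) μ a b := by
  refine ((hf.abs.add hg.abs).div_const 2).mono_fun'
    (Real.continuous_sqrt.comp_aestronglyMeasurable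
      (hf.aestronglyMeasurable_restrict_uIoc.mul hg.aestronglyMeasurable_restrict_uIoc))
    (ae_of_all _ fun x => ?_)
  simp only [Real.norm_of_nonneg (Real.sqrt_nonneg _)]
  exact Real.sqrt_mul_le_half_abs_add _ _

theorem sqrt [IsLocallyFiniteMeasure μ] (hf : IntervalIntegrable f μ a b) :
    IntervalIntegrable (fun x => √(f x)) μ a b := by
  simpa using hf.sqrt_mul (intervalIntegrable_const (c := 1))

theorem mono_left_of_mem_Icc {s : ℝ} (hf : IntervalIntegrable f μ a b) (hs : s ∈ Icc a b) :
    IntervalIntegrable f μ s b :=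
  hf.mono_set (uIcc_subset_uIcc (mem_uIcc_of_le hs.1 hs.2) right_mem_uIcc)

end IntervalIntegrable

theorem integral_growth_le {u w : ℝ → ℝ} {s T : ℝ} (lam : ℝ) (hsT : s ≤ T)
    (hu : IntervalIntegrable u volume s T) (hw : IntervalIntegrable w volume s T)
    (hu0 : ∀ r ∈ Icc s T, 0 ≤ u r) (hw0 : ∀ r ∈ Icc s T, 0 ≤ w r) :
    2 * lam * ∫ r in s..T, (3 * √(u r) + u r + √(u r * w r)) ≤
      9 * (T - s) + (1 + 4 * lam ^ 2) * (∫ r in s..T, u r) + (∫ r in s..T, w r) / 2 := by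
  have hg : IntervalIntegrable (fun r => 3 * √(u r) + u r + √(u r * w r)) volume s T :=
    (hu.sqrt.const_mul 3 |>.add hu).add (hu.sqrt_mul hw)
  have hbound : IntervalIntegrable (fun r => 9 + (1 + 4 * lam ^ 2) * u r + w r / 2) volume s T :=
    (intervalIntegrable_const.add (hu.const_mul _)).add (hw.div_const 2)
  calc 2 * lam * ∫ r in s..T, (3 * √(u r) + u r + √(u r * w r))
      = ∫ r in s..T, 2 * lam * (3 * √(u r) + u r + √(u r * w r)) :=
        (intervalIntegral.integral_const_mul _ _).symm
    _ ≤ ∫ r in s..T, (9 + (1 + 4 * lam ^ 2) * u r + w r / 2) :=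
        intervalIntegral.integral_mono_on hsT (hg.const_mul _) hbound
          fun r hr => two_mul_growth_le lam (hu0 r hr) (hw0 r hr)
    _ = 9 * (T - s) + (1 + 4 * lam ^ 2) * (∫ r in s..T, u r) + (∫ r in s..T, w r) / 2 := by
        rw [intervalIntegral.integral_add (intervalIntegrable_const.add (hu.const_mul _))
            (hw.div_const 2), intervalIntegral.integral_add intervalIntegrable_const
            (hu.const_mul _), intervalIntegral.integral_const, intervalIntegral.integral_const_mul,
          intervalIntegral.integral_div, smul_eq_mul]
        ring

theorem integral_sub_left_pow (T s : ℝ) (n : ℕ) :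
    ∫ r in s..T, (T - r) ^ n = (T - s) ^ (n + 1) / (n + 1) := by
  simp [intervalIntegral.integral_comp_sub_left (fun x : ℝ => x ^ n), integral_pow]

theorem mul_integral_mul_exp_sub_left (B c T s : ℝ) :
    c * ∫ r in s..T, B * exp (c * (T - r)) = B * exp (c * (T - s)) - B := by
  have hderiv : ∀ r, HasDerivAt (fun r => -(B * exp (c * (T - r))))
      (c * (B * exp (c * (T - r)))) r := fun r =>
    ((((hasDerivAt_id r).const_sub T).const_mul c).exp.const_mul B).neg.congr_deriv
      (by simp; ring)
  rw [← intervalIntegral.integral_const_mul, intervalIntegral.integral_eq_sub_of_hasDerivAt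
    (fun r _ => hderiv r) ((by fun_prop : Continuous _).intervalIntegrable _ _)]
  simp
  ring

section BackwardGronwall

variable {u : ℝ → ℝ} {t T c : ℝ}

theorem le_mul_pow_div_factorial_of_le_mul_integral (hc : 0 ≤ c)
    (hu : IntervalIntegrable u volume t T) {K : ℝ} (hK : ∀ s ∈ Icc t T, u s ≤ K)
    (h : ∀ s ∈ Icc t T, u s ≤ c * ∫ r in s..T, u r) (n : ℕ) :
    ∀ s ∈ Icc t T, u s ≤ K * ((c * (T - s)) ^ n / n !) := by
  induction n with
  | zero => simpa using hK
  | succ n ih =>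
    intro s hs
    calc u s ≤ c * ∫ r in s..T, u r := h s hs
      _ ≤ c * ∫ r in s..T, K * c ^ n / n ! * (T - r) ^ n := by
          gcongr
          refine intervalIntegral.integral_mono_on hs.2 (hu.mono_left_of_mem_Icc hs)
            ((by fun_prop : Continuous _).intervalIntegrable _ _) fun r hr => ?_
          exact (ih r ⟨hs.1.trans hr.1, hr.2⟩).trans_eq (by rw [mul_pow]; ring)
      _ = K * ((c * (T - s)) ^ (n + 1) / (n + 1)!) := by
          rw [intervalIntegral.integral_const_mul, integral_sub_left_pow, Nat.factorial_succ]
          push_cast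
          field_simp
          rw [mul_pow]
          ring

theorem nonpos_of_le_mul_integral (hc : 0 ≤ c) (hu : IntervalIntegrable u volume t T)
    (hbdd : ∃ K, ∀ s ∈ Icc t T, u s ≤ K) (h : ∀ s ∈ Icc t T, u s ≤ c * ∫ r in s..T, u r) :
    ∀ s ∈ Icc t T, u s ≤ 0 := by
  obtain ⟨K, hK⟩ := hbdd
  intro s hs
  have hlim := (FloorSemiring.tendsto_pow_div_factorial_atTop (c * (T - s))).const_mul K
  rw [mul_zero] at hlim
  exact ge_of_tendsto' hlim fun n => le_mul_pow_div_factorial_of_le_mul_integral hc hu hK h n s hs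

theorem le_mul_exp_of_le_add_mul_integral {B : ℝ} (hc : 0 ≤ c)
    (hu : IntervalIntegrable u volume t T) (hbdd : ∃ K, ∀ s ∈ Icc t T, u s ≤ K)
    (h : ∀ s ∈ Icc t T, u s ≤ B + c * ∫ r in s..T, u r) :
    ∀ s ∈ Icc t T, u s ≤ B * exp (c * (T - s)) := by
  set v : ℝ → ℝ := fun r => B * exp (c * (T - r))
  have hv : ∀ a b, IntervalIntegrable v volume a b := fun a b =>
    (by fun_prop : Continuous v).intervalIntegrable a b
  obtain ⟨K, hK⟩ := hbdd
  have hgap := nonpos_of_le_mul_integral (u := u - v) hc (hu.sub (hv t T))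
    ⟨K + |B| * exp (c * (T - t)), fun s hs => ?bound⟩ fun s hs => ?step
  · exact fun s hs => sub_nonpos.1 (hgap s hs)
  case bound =>
    have : -v s ≤ |B| * exp (c * (T - t)) :=
      calc -v s ≤ |B| * exp (c * (T - s)) := by
            simp only [v, ← neg_mul]; gcongr; exact neg_le_abs B
        _ ≤ |B| * exp (c * (T - t)) := by gcongr; exact hs.1
    simpa [sub_eq_add_neg] using add_le_add (hK s hs) this
  case step =>
    simp only [Pi.sub_apply]
    rw [intervalIntegral.integral_sub (hu.mono_left_of_mem_Icc hs) (hv s T), mul_sub,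
      mul_integral_mul_exp_sub_left]
    linarith [h s hs]

end BackwardGronwall

theorem stmt_10_general (t T A lam : ℝ) (htT : t ≤ T) (hA : 0 ≤ A)
    (u w : ℝ → ℝ) (hu_meas : Measurable u)
    (hu_nonneg : ∀ s ∈ Set.Icc t T, 0 ≤ u s)
    (hw_nonneg : ∀ s ∈ Set.Icc t T, 0 ≤ w s)
    (hu_bdd : ∃ K : ℝ, ∀ s ∈ Set.Icc t T, u s ≤ K)
    (hw_int : MeasureTheory.IntegrableOn w (Set.Icc t T))
    (hineq : ∀ s ∈ Set.Icc t T,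
      u s + ∫ r in s..T, w r ≤
        A + 2 * lam * ∫ r in s..T,
          (3 * Real.sqrt (u r) + u r + Real.sqrt (u r * w r))) :
    (∀ s ∈ Set.Icc t T,
        u s ≤ (A + 9 * (T - t)) * Real.exp ((1 + 4 * lam ^ 2) * (T - t))) ∧
    (∫ r in t..T, w r) ≤ 2 * (A + 9 * (T - t)) +
        2 * (1 + 4 * lam ^ 2) * (T - t) *
          ((A + 9 * (T - t)) * Real.exp ((1 + 4 * lam ^ 2) * (T - t))) := by
  obtain ⟨K, hK⟩ := hu_bdd
  have hu : IntervalIntegrable u volume t T :=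
    (intervalIntegrable_iff_integrableOn_Icc_of_le htT).2 <|
      Measure.integrableOn_of_bounded measure_Icc_lt_top.ne hu_meas.aestronglyMeasurable
        (M := K) <| (ae_restrict_mem measurableSet_Icc).mono fun s hs => by
          rw [Real.norm_of_nonneg (hu_nonneg s hs)]; exact hK s hs
  have hw : IntervalIntegrable w volume t T :=
    (intervalIntegrable_iff_integrableOn_Icc_of_le htT).2 hw_int
  have hlinear : ∀ s ∈ Icc t T, u s + (∫ r in s..T, w r) / 2 ≤
      A + 9 * (T - t) + (1 + 4 * lam ^ 2) * ∫ r in s..T, u r := fun s hs => by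
    have := integral_growth_le lam hs.2 (hu.mono_left_of_mem_Icc hs) (hw.mono_left_of_mem_Icc hs)
      (fun r hr => hu_nonneg r ⟨hs.1.trans hr.1, hr.2⟩)
      (fun r hr => hw_nonneg r ⟨hs.1.trans hr.1, hr.2⟩)
    linarith [hineq s hs, hs.1]
  have hgronwall : ∀ s ∈ Icc t T,
      u s ≤ A + 9 * (T - t) + (1 + 4 * lam ^ 2) * ∫ r in s..T, u r := fun s hs => by
    have hw0 : 0 ≤ ∫ r in s..T, w r := intervalIntegral.integral_nonneg hs.2
      fun r hr => hw_nonneg r ⟨hs.1.trans hr.1, hr.2⟩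
    linarith [hlinear s hs]
  have hu_le : ∀ s ∈ Icc t T,
      u s ≤ (A + 9 * (T - t)) * exp ((1 + 4 * lam ^ 2) * (T - t)) := fun s hs =>
    (le_mul_exp_of_le_add_mul_integral (by positivity) hu ⟨K, hK⟩ hgronwall s hs).trans <|
      mul_le_mul_of_nonneg_left (by gcongr; exact hs.1) (by linarith)
  refine ⟨hu_le, ?_⟩
  have hu_int_le := intervalIntegral.integral_mono_on htT hu intervalIntegrable_const hu_le
  rw [intervalIntegral.integral_const, smul_eq_mul] at hu_int_le
  linarith [hlinear t ⟨le_rfl, htT⟩, hu_nonneg t ⟨le_rfl, htT⟩,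
    mul_le_mul_of_nonneg_left hu_int_le (by positivity : (0 : ℝ) ≤ 1 + 4 * lam ^ 2)]

/-- Deterministic core of the a priori estimate for BSDEs with sublinearly growing
generator: if `u` is bounded measurable, `w` is integrable, both nonnegative, and
`u(s) + ∫_s^T w ≤ A + 2λ ∫_s^T (3√u + u + √(u w))` for all `s ∈ [t,T]`, then with
`C₁ = (A + 9(T-t)) exp((1+4λ²)(T-t))` one has `u ≤ C₁` on `[t,T]` and
`∫_t^T w ≤ 2(A + 9(T-t)) + 2(1+4λ²)(T-t) C₁`. -/
theorem stmt_10 (t T A lam : ℝ) (htT : t ≤ T) (hA : 0 ≤ A) (hlam : 0 ≤ lam)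
    (u w : ℝ → ℝ) (hu_meas : Measurable u) (hw_meas : Measurable w)
    (hu_nonneg : ∀ s ∈ Set.Icc t T, 0 ≤ u s)
    (hw_nonneg : ∀ s ∈ Set.Icc t T, 0 ≤ w s)
    (hu_bdd : ∃ K : ℝ, ∀ s ∈ Set.Icc t T, u s ≤ K)
    (hw_int : MeasureTheory.IntegrableOn w (Set.Icc t T))
    (hineq : ∀ s ∈ Set.Icc t T,
      u s + ∫ r in s..T, w r ≤
        A + 2 * lam * ∫ r in s..T,
          (3 * Real.sqrt (u r) + u r + Real.sqrt (u r * w r))) :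
    (∀ s ∈ Set.Icc t T,
        u s ≤ (A + 9 * (T - t)) * Real.exp ((1 + 4 * lam ^ 2) * (T - t))) ∧
    (∫ r in t..T, w r) ≤ 2 * (A + 9 * (T - t)) +
        2 * (1 + 4 * lam ^ 2) * (T - t) *
          ((A + 9 * (T - t)) * Real.exp ((1 + 4 * lam ^ 2) * (T - t))) :=
  stmt_10_general t T A lam htT hA u w hu_meas hu_nonneg hw_nonneg hu_bdd hw_int hineq
end
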